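/- arXiv:1011.3383 — 2 statements merged into one kernel-verified Lean document; each statement's English description precedes it below -/
import Mathlib

section
/- For every finite simple graph G on n vertices with minimum degree δ(G) ≥ 1, the domination number satisfies γ(G) ≤ n/2. -/
def IsDominating {V : Type*} (G : SimpleGraph V) (D : Set V) : Prop :=
  ∀ v : V, v ∉ D → ∃ u ∈ D, G.Adj u v

noncomputable def dominationNumber {V : Type*} [Fintype V] (G : SimpleGraph V) : ℕ :=
  sInf {k | ∃ D : Finset V, IsDominating G ↑D ∧ D.card = k}

/-!
Take a dominating set `D` of minimum size. If some `v ∈ D` had no neighbour outside `D`, then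
`D \ {v}` would still dominate: `v` itself is dominated by one of its neighbours, all of which lie
in `D \ {v}`, and no other vertex relied on `v`. So every vertex of `D` has a neighbour in the
complement, i.e. `Dᶜ` dominates as well, and `γ(G) ≤ min(|D|, n - |D|) ≤ n / 2`.
-/

namespace IsDominating

variable {V : Type*} {G : SimpleGraph V} {D : Set V}

theorem univ (G : SimpleGraph V) : IsDominating G Set.univ :=
  fun _ hv => absurd (Set.mem_univ _) hv

theorem diff_singleton (hD : IsDominating G D) {v : V} (hv : ∀ u, G.Adj v u → u ∈ D)
    (hv_nonisolated : ∃ u, G.Adj v u) : IsDominating G (D \ {v}) := by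
  intro w hw
  by_cases hwv : w = v
  · subst hwv
    obtain ⟨u, hu⟩ := hv_nonisolated
    exact ⟨u, ⟨hv u hu, hu.ne.symm⟩, hu.symm⟩
  · have hwD : w ∉ D := fun h => hw ⟨h, hwv⟩
    obtain ⟨u, huD, hu⟩ := hD w hwD
    refine ⟨u, ⟨huD, ?_⟩, hu⟩
    rintro rfl
    exact hwD (hv w hu)

theorem compl_of_minimal (hD : IsDominating G D)
    (hmin : ∀ v ∈ D, ¬IsDominating G (D \ {v})) (hnonisolated : ∀ v, ∃ u, G.Adj v u) :
    IsDominating G Dᶜ := by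
  intro v hv
  rw [Set.notMem_compl_iff] at hv
  by_contra! hno
  have hnbrs : ∀ u, G.Adj v u → u ∈ D := fun u hu => by_contra fun hu' => hno u hu' hu.symm
  exact hmin v hv (hD.diff_singleton hnbrs (hnonisolated v))

end IsDominating

section dominationNumber

variable {V : Type*} [Fintype V] {G : SimpleGraph V}

theorem dominationNumber_le_card {D : Finset V} (hD : IsDominating G D) :
    dominationNumber G ≤ D.card :=
  Nat.sInf_le ⟨D, hD, rfl⟩

theorem exists_isDominating_card_eq_dominationNumber (G : SimpleGraph V) :
    ∃ D : Finset V, IsDominating G D ∧ D.card = dominationNumber G :=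
  Nat.sInf_mem (s := {k | ∃ D : Finset V, IsDominating G ↑D ∧ D.card = k})
    ⟨_, Finset.univ, by simpa using IsDominating.univ G, rfl⟩

theorem two_mul_dominationNumber_le_card (hnonisolated : ∀ v, ∃ u, G.Adj v u) :
    2 * dominationNumber G ≤ Fintype.card V := by
  classical
  obtain ⟨D, hD, hcard⟩ := exists_isDominating_card_eq_dominationNumber G
  have hmin : ∀ v ∈ (D : Set V), ¬IsDominating G (D \ {v} : Set V) := fun v hv hdom => by
    rw [← Finset.coe_erase] at hdom
    have hle := dominationNumber_le_card hdom
    have hlt := Finset.card_erase_lt_of_mem (Finset.mem_coe.mp hv)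
    omega
  have hcompl : IsDominating G (Dᶜ : Finset V) := by
    rw [Finset.coe_compl]
    exact hD.compl_of_minimal hmin hnonisolated
  have hle_compl := dominationNumber_le_card hcompl
  rw [Finset.card_compl] at hle_compl
  have hle_univ := D.card_le_univ
  omega

end dominationNumber

theorem stmt_5 {V : Type*} [Fintype V] (G : SimpleGraph V)
    [DecidableRel G.Adj] (hδ : 1 ≤ G.minDegree) :
    (dominationNumber G : ℝ) ≤ (Fintype.card V : ℝ) / 2 := by
  have hnonisolated : ∀ v, ∃ u, G.Adj v u := fun v =>
    (G.degree_pos_iff_exists_adj v).mp (hδ.trans (G.minDegree_le_degree v))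
  have h := two_mul_dominationNumber_le_card hnonisolated
  rw [le_div_iff₀ two_pos]
  exact_mod_cast (by omega : dominationNumber G * 2 ≤ Fintype.card V)
end

section
/- For every real x ≥ 7, the function f(x) = 1 - x·(1/(x+1))^{1+1/x} satisfies f(x) < x/(3x-1). -/
/-!
Writing `p = 1 + 1/x`, the claim is equivalent to `(x + 1) ^ p < x (3x - 1) / (2x - 1)`. We bound
`(x + 1) ^ (1/x) < 35/26`: in logarithms this is `log (x + 1) < x log (35/26)`, which holds at
`x = 7` (as `8 < (35/26)^7`) and persists for `x ≥ 7` because the tangent of `log` at `8` has slope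
`1/8 < log (35/26)`. Finally `35/26 · (x + 1) ≤ x (3x - 1) / (2x - 1)` for `x ≥ 7`, with equality
at `x = 7`.
-/

open Real

theorem one_eighth_lt_log_35_div_26 : 1 / 8 < log (35 / 26) := by
  have hexp : exp 1 < (35 / 26 : ℝ) ^ 8 := by
    nlinarith [exp_one_lt_d9]
  have h : 1 < log ((35 / 26 : ℝ) ^ 8) := by
    simpa using log_lt_log (exp_pos 1) hexp
  rw [log_pow] at h
  push_cast at h
  linarith

theorem log_eight_lt_seven_mul_log_35_div_26 : log 8 < 7 * log (35 / 26) := by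
  have h : log 8 < log ((35 / 26 : ℝ) ^ 7) := log_lt_log (by norm_num) (by norm_num)
  rwa [log_pow, Nat.cast_ofNat] at h

-- Concavity of `log`: its tangent line at `a + 1` has slope `1 / (a + 1) ≤ log c`.
theorem log_add_one_lt_mul_log_of_le {a c x : ℝ} (ha : -1 < a) (hc : 1 / (a + 1) ≤ log c)
    (hac : log (a + 1) < a * log c) (hax : a ≤ x) : log (x + 1) < x * log c := by
  have ha1 : 0 < a + 1 := by linarith
  have htangent : log (x + 1) - log (a + 1) ≤ (x + 1) / (a + 1) - 1 := by
    rw [← log_div (by linarith) ha1.ne']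
    exact log_le_sub_one_of_pos (div_pos (by linarith) ha1)
  have hslope : (x + 1) / (a + 1) - 1 ≤ (x - a) * log c := by
    rw [show (x + 1) / (a + 1) - 1 = (x - a) * (1 / (a + 1)) by field_simp; ring]
    exact mul_le_mul_of_nonneg_left hc (by linarith)
  linarith

theorem add_one_rpow_inv_lt {x : ℝ} (hx : 7 ≤ x) : (x + 1) ^ (1 / x) < 35 / 26 := by
  have hx0 : 0 < x := by linarith
  have hlog : log (x + 1) < x * log (35 / 26) :=
    log_add_one_lt_mul_log_of_le (by norm_num) (by linarith [one_eighth_lt_log_35_div_26])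
      (by norm_num [log_eight_lt_seven_mul_log_35_div_26]) hx
  rw [rpow_def_of_pos (by linarith), ← exp_log (show (0 : ℝ) < 35 / 26 by norm_num)]
  rw [exp_lt_exp, mul_one_div, div_lt_iff₀ hx0, mul_comm]
  exact hlog

theorem mul_add_one_le_div {x : ℝ} (hx : 7 ≤ x) :
    35 / 26 * (x + 1) ≤ x * (3 * x - 1) / (2 * x - 1) := by
  rw [le_div_iff₀ (by linarith)]
  nlinarith [mul_nonneg (by linarith : (0 : ℝ) ≤ x - 7) (by linarith : (0 : ℝ) ≤ 8 * x - 5)]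

theorem one_sub_div_lt_div {x y : ℝ} (hx : 1 / 2 < x) (hy : 0 < y)
    (hxy : y < x * (3 * x - 1) / (2 * x - 1)) : 1 - x / y < x / (3 * x - 1) := by
  have h2 : 0 < 2 * x - 1 := by linarith
  have h3 : 0 < 3 * x - 1 := by linarith
  rw [lt_div_iff₀ h2] at hxy
  have hlt : (2 * x - 1) / (3 * x - 1) < x / y := by
    rw [div_lt_div_iff₀ h3 hy]
    linarith
  have heq : 1 - x / (3 * x - 1) = (2 * x - 1) / (3 * x - 1) := by
    rw [eq_div_iff h3.ne', sub_mul, div_mul_cancel₀ _ h3.ne']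
    ring
  linarith

theorem stmt_10 (x : ℝ) (hx : 7 ≤ x) :
    1 - x * ((1 / (x + 1)) ^ ((1 : ℝ) + 1 / x)) < x / (3 * x - 1) := by
  have hx1 : 0 < x + 1 := by linarith
  rw [one_div, inv_rpow hx1.le, ← div_eq_mul_inv]
  refine one_sub_div_lt_div (by linarith) (by positivity) ?_
  calc (x + 1) ^ ((1 : ℝ) + 1 / x) = (x + 1) * (x + 1) ^ (1 / x) := by
        rw [rpow_add hx1, rpow_one]
    _ < (x + 1) * (35 / 26) := mul_lt_mul_of_pos_left (add_one_rpow_inv_lt hx) hx1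
    _ ≤ x * (3 * x - 1) / (2 * x - 1) := by linarith [mul_add_one_le_div hx]
end
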